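/- A subset A of a Steiner quasigroup M is a free base of M if and only if M admits a well-ordered free ordering over A, i.e., a well-order < of M such that for every a ∈ M there is a unique pair {a₁, a₂} ⊆ M with a = a₁·a₂ and each aᵢ either in A or smaller than a. -/

import Mathlib

/-- A Steiner quasigroup: a commutative, idempotent binary structure
with `x * (x * y) = y`. -/
class Steiner (M : Type) extends Mul M where
  comm : ∀ x y : M, x * y = y * x
  idem : ∀ x : M, x * x = x
  lcancel : ∀ x y : M, x * (x * y) = y

namespace Steiner

variable {M : Type} [Steiner M]

/-- Membership in the subquasigroup generated by `A`. -/
inductive mem_closure (A : Set M) : M → Prop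
  | base {a : M} : a ∈ A → mem_closure A a
  | mul {a b : M} : mem_closure A a → mem_closure A b → mem_closure A (a * b)

/-- The subquasigroup generated by `A`. -/
def closure (A : Set M) : Set M := {x | mem_closure A x}

instance (A : Set M) : Steiner (closure A) where
  mul a b := ⟨a.1 * b.1, a.2.mul b.2⟩
  comm a b := Subtype.ext (Steiner.comm a.1 b.1)
  idem a := Subtype.ext (Steiner.idem a.1)
  lcancel a b := Subtype.ext (Steiner.lcancel a.1 b.1)

/-- `A` is independent: the generated subquasigroup has the universal mapping
property over `A` with respect to the class of Steiner quasigroups. -/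
def Independent (A : Set M) : Prop :=
  ∀ (N : Type) [Steiner N] (f : A → N),
    ∃ g : closure A →ₙ* N, ∀ a : A, g ⟨a.1, mem_closure.base a.2⟩ = f a

/-- A tuple is independent if its entries are pairwise distinct and its
range is an independent set. -/
def IndepTuple {ι : Type} (a : ι → M) : Prop :=
  Function.Injective a ∧ Independent (Set.range a)

/-- `A` is a free base of `M`: it generates `M` and `M` has the universal
mapping property over `A`. -/
def FreeBase (A : Set M) : Prop :=
  closure A = Set.univ ∧
  ∀ (N : Type) [Steiner N] (f : A → N),
    ∃ g : M →ₙ* N, ∀ a : A, g a.1 = f a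

/-- Terms in the language with one binary operation. -/
inductive Term (α : Type) where
  | var : α → Term α
  | mul : Term α → Term α → Term α

/-- Evaluation of a term at an assignment. -/
def Term.eval {α : Type} (e : α → M) : Term α → M
  | .var x => e x
  | .mul t s => t.eval e * s.eval e

/-- Equivalence of terms generated by applications of commutativity to subterms. -/
inductive TEquiv {α : Type} : Term α → Term α → Prop
  | refl (t : Term α) : TEquiv t t
  | symm {t s : Term α} : TEquiv t s → TEquiv s t
  | trans {t s u : Term α} : TEquiv t s → TEquiv s u → TEquiv t u
  | comm (t s : Term α) : TEquiv (.mul t s) (.mul s t)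
  | congr {t t' s s' : Term α} : TEquiv t t' → TEquiv s s' →
      TEquiv (.mul t s) (.mul t' s')

/-- The subterm relation. -/
inductive Subterm {α : Type} : Term α → Term α → Prop
  | refl (t : Term α) : Subterm t t
  | left {s t r : Term α} : Subterm s t → Subterm s (.mul t r)
  | right {s t r : Term α} : Subterm s t → Subterm s (.mul r t)

/-- A term is reduced if it contains no subterm of the forms `t₁·t₂` with
`t₁ ∼ t₂`, `t₁·(t₂·t₃)` with `t₁ ∼ t₂` or `t₁ ∼ t₃`, or `(t₁·t₂)·t₃` with
`t₁ ∼ t₃` or `t₂ ∼ t₃`. -/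
def Reduced {α : Type} (t : Term α) : Prop :=
  (∀ t1 t2 : Term α, Subterm (.mul t1 t2) t → ¬ TEquiv t1 t2) ∧
  (∀ t1 t2 t3 : Term α, Subterm (.mul t1 (.mul t2 t3)) t →
      ¬ TEquiv t1 t2 ∧ ¬ TEquiv t1 t3) ∧
  (∀ t1 t2 t3 : Term α, Subterm (.mul (.mul t1 t2) t3) t →
      ¬ TEquiv t1 t3 ∧ ¬ TEquiv t2 t3)

/-- The rank of a term. -/
def Term.rank {α : Type} : Term α → ℕ
  | .var _ => 0
  | .mul t s => max t.rank s.rank + 1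

/-- Number of occurrences of a variable in a term. -/
def Term.occ {α : Type} [DecidableEq α] (x : α) : Term α → ℕ
  | .var y => if y = x then 1 else 0
  | .mul t s => t.occ x + s.occ x

/-- The variable `x` occurs in the term. -/
inductive Occurs {α : Type} (x : α) : Term α → Prop
  | var : Occurs x (.var x)
  | left {t s : Term α} : Occurs x t → Occurs x (.mul t s)
  | right {t s : Term α} : Occurs x s → Occurs x (.mul t s)

/-- The levels of `M` over `A`. -/
def level (A : Set M) : ℕ → Set M
  | 0 => A
  | n + 1 => {z | ∃ a ∈ level A n, ∃ b ∈ level A n, z = a * b}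

/-- `S` is a standard free construction over `A`. -/
def StdFree (A : Set M) (S : ℕ → Set M) : Prop :=
  S 0 = A ∧
  (∀ n, S (n + 1) = {z | ∃ a ∈ S n, ∃ b ∈ S n, z = a * b}) ∧
  (∀ a ∈ S 0, ∀ b ∈ S 0, a ≠ b → a * b ∉ S 0) ∧
  (∀ n, ∀ a ∈ S (n + 1), a ∉ S n → ∀ b ∈ S (n + 1), b ∉ S n → a ≠ b →
    a * b ∉ S (n + 1)) ∧
  (∀ n, ∀ a ∈ S (n + 1), a ∉ S n → ∃ b ∈ S n, ∃ c ∈ S n, b ≠ c ∧ a = b * c ∧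
    ∀ b' ∈ S n, ∀ c' ∈ S n, b' ≠ c' → a = b' * c' → ({b', c'} : Set M) = {b, c})

theorem eval_mem_closure {α : Type} {A : Set M} (e : α → M) (h : ∀ x, e x ∈ A) :
    ∀ t : Term α, t.eval e ∈ closure A
  | .var x => mem_closure.base (h x)
  | .mul t s => mem_closure.mul (eval_mem_closure e h t) (eval_mem_closure e h s)

end Steiner

open Steiner
namespace Steiner

variable {α : Type}

attribute [local instance] Classical.propDecidable

theorem tequiv_rank {t s : Term α} (h : TEquiv t s) : t.rank = s.rank := by
  induction h with
  | refl => rfl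
  | symm _ ih => omega
  | trans _ _ ih1 ih2 => omega
  | comm t s => simp [Term.rank, Nat.max_comm]
  | congr _ _ ih1 ih2 => simp [Term.rank, ih1, ih2]

/-- shape-inversion statement -/
def TShape : Term α → Term α → Prop
  | .var x, s => s = .var x
  | .mul a b, s => ∃ a' b', s = .mul a' b' ∧
      ((TEquiv a a' ∧ TEquiv b b') ∨ (TEquiv a b' ∧ TEquiv b a'))

theorem tequiv_shape {t s : Term α} (h : TEquiv t s) : TShape t s ∧ TShape s t := by
  induction h with
  | refl t =>
    cases t with
    | var x => exact ⟨rfl, rfl⟩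
    | mul a b => exact ⟨⟨a, b, rfl, Or.inl ⟨.refl a, .refl b⟩⟩, ⟨a, b, rfl, Or.inl ⟨.refl a, .refl b⟩⟩⟩
  | symm _ ih => exact ⟨ih.2, ih.1⟩
  | trans _ _ ih1 ih2 =>
    constructor
    · rename_i t s u _ _
      cases t with
      | var x =>
        have h1 := ih1.1; have h2 := ih2.1
        simp only [TShape] at *
        subst h1; exact h2
      | mul a b =>
        obtain ⟨a', b', rfl, hab⟩ := ih1.1
        obtain ⟨a'', b'', rfl, hab'⟩ := ih2.1
        refine ⟨a'', b'', rfl, ?_⟩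
        rcases hab with ⟨h1, h2⟩ | ⟨h1, h2⟩ <;> rcases hab' with ⟨h3, h4⟩ | ⟨h3, h4⟩
        · exact Or.inl ⟨h1.trans h3, h2.trans h4⟩
        · exact Or.inr ⟨h1.trans h3, h2.trans h4⟩
        · exact Or.inr ⟨h1.trans h4, h2.trans h3⟩
        · exact Or.inl ⟨h1.trans h4, h2.trans h3⟩
    · rename_i t s u _ _
      cases u with
      | var x =>
        have h1 := ih1.2; have h2 := ih2.2
        simp only [TShape] at *
        subst h2; exact h1
      | mul a b =>
        obtain ⟨a', b', rfl, hab⟩ := ih2.2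
        obtain ⟨a'', b'', rfl, hab'⟩ := ih1.2
        refine ⟨a'', b'', rfl, ?_⟩
        rcases hab with ⟨h1, h2⟩ | ⟨h1, h2⟩ <;> rcases hab' with ⟨h3, h4⟩ | ⟨h3, h4⟩
        · exact Or.inl ⟨h1.trans h3, h2.trans h4⟩
        · exact Or.inr ⟨h1.trans h3, h2.trans h4⟩
        · exact Or.inr ⟨h1.trans h4, h2.trans h3⟩
        · exact Or.inl ⟨h1.trans h4, h2.trans h3⟩
  | comm t s =>
    exact ⟨⟨s, t, rfl, Or.inr ⟨.refl t, .refl s⟩⟩, ⟨t, s, rfl, Or.inr ⟨.refl s, .refl t⟩⟩⟩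
  | congr h1 h2 =>
    rename_i t t' s s' _ _
    exact ⟨⟨t', s', rfl, Or.inl ⟨h1, h2⟩⟩, ⟨t, s, rfl, Or.inl ⟨h1.symm, h2.symm⟩⟩⟩

theorem tequiv_var {x : α} {s : Term α} (h : TEquiv (.var x) s) : s = .var x :=
  (tequiv_shape h).1

theorem tequiv_mul {a b : Term α} {s : Term α} (h : TEquiv (.mul a b) s) :
    ∃ a' b', s = .mul a' b' ∧
      ((TEquiv a a' ∧ TEquiv b b') ∨ (TEquiv a b' ∧ TEquiv b a')) :=
  (tequiv_shape h).1

theorem eval_tequiv {N : Type} [Steiner N] (e : α → N) {t s : Term α} (h : TEquiv t s) :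
    t.eval e = s.eval e := by
  induction h with
  | refl => rfl
  | symm _ ih => exact ih.symm
  | trans _ _ ih1 ih2 => exact ih1.trans ih2
  | comm t s => exact Steiner.comm _ _
  | congr _ _ ih1 ih2 => simp [Term.eval, ih1, ih2]

end Steiner
namespace Steiner

variable {α : Type}

attribute [local instance] Classical.propDecidable

theorem subterm_var {s : Term α} {x : α} (h : Subterm s (.var x)) : s = .var x := by
  cases h; rfl

theorem subterm_mul_iff {s a b : Term α} :
    Subterm s (.mul a b) ↔ s = .mul a b ∨ Subterm s a ∨ Subterm s b := by
  constructor
  · intro h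
    cases h with
    | refl => exact Or.inl rfl
    | left h => exact Or.inr (Or.inl h)
    | right h => exact Or.inr (Or.inr h)
  · rintro (rfl | h | h)
    · exact .refl _
    · exact .left h
    · exact .right h

theorem reduced_var (x : α) : Reduced (.var x : Term α) := by
  refine ⟨?_, ?_, ?_⟩ <;> intros t1 t2 h <;> first
    | (exact absurd (subterm_var h) (by simp))
    | (intro h3; exact absurd (subterm_var h3) (by simp))

theorem reduced_left {a b : Term α} (h : Reduced (.mul a b)) : Reduced a :=
  ⟨fun t1 t2 hs => h.1 t1 t2 (.left hs),
   fun t1 t2 t3 hs => h.2.1 t1 t2 t3 (.left hs),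
   fun t1 t2 t3 hs => h.2.2 t1 t2 t3 (.left hs)⟩

theorem reduced_right {a b : Term α} (h : Reduced (.mul a b)) : Reduced b :=
  ⟨fun t1 t2 hs => h.1 t1 t2 (.right hs),
   fun t1 t2 t3 hs => h.2.1 t1 t2 t3 (.right hs),
   fun t1 t2 t3 hs => h.2.2 t1 t2 t3 (.right hs)⟩

theorem reduced_top {a b : Term α} (h : Reduced (.mul a b)) : ¬ TEquiv a b :=
  h.1 a b (.refl _)

theorem reduced_top_right {a u v : Term α} (h : Reduced (.mul a (.mul u v))) :
    ¬ TEquiv a u ∧ ¬ TEquiv a v := h.2.1 a u v (.refl _)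

theorem reduced_top_left {u v b : Term α} (h : Reduced (.mul (.mul u v) b)) :
    ¬ TEquiv u b ∧ ¬ TEquiv v b := h.2.2 u v b (.refl _)

theorem reduced_mul {a b : Term α} (ha : Reduced a) (hb : Reduced b)
    (hab : ¬ TEquiv a b)
    (h1 : ∀ u v, b = .mul u v → ¬ TEquiv a u ∧ ¬ TEquiv a v)
    (h2 : ∀ u v, a = .mul u v → ¬ TEquiv u b ∧ ¬ TEquiv v b) :
    Reduced (.mul a b) := by
  refine ⟨?_, ?_, ?_⟩
  · intro t1 t2 hs
    rcases subterm_mul_iff.1 hs with heq | hs | hs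
    · cases heq; exact hab
    · exact ha.1 _ _ hs
    · exact hb.1 _ _ hs
  · intro t1 t2 t3 hs
    rcases subterm_mul_iff.1 hs with heq | hs | hs
    · injection heq with e1 e2; subst e1; exact h1 _ _ e2.symm
    · exact ha.2.1 _ _ _ hs
    · exact hb.2.1 _ _ _ hs
  · intro t1 t2 t3 hs
    rcases subterm_mul_iff.1 hs with heq | hs | hs
    · injection heq with e1 e2; subst e2; exact h2 _ _ e1.symm
    · exact ha.2.2 _ _ _ hs
    · exact hb.2.2 _ _ _ hs

/-- `pierce x y = some z` if `y = u·v` with `x ∼ u` (then `z = v`) or `x ∼ v`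
(then `z = u`). -/
noncomputable def pierce (x : Term α) : Term α → Option (Term α)
  | .var _ => none
  | .mul u v => if TEquiv x u then some v else if TEquiv x v then some u else none

theorem pierce_some {x y z : Term α} (h : pierce x y = some z) :
    ∃ u v, y = .mul u v ∧ ((TEquiv x u ∧ z = v) ∨ (¬ TEquiv x u ∧ TEquiv x v ∧ z = u)) := by
  cases y with
  | var w => simp [pierce] at h
  | mul u v =>
    refine ⟨u, v, rfl, ?_⟩
    by_cases h1 : TEquiv x u
    · simp [pierce, h1] at h; exact Or.inl ⟨h1, h.symm⟩
    · by_cases h2 : TEquiv x v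
      · simp [pierce, h1, h2] at h; exact Or.inr ⟨h1, h2, h.symm⟩
      · simp [pierce, h1, h2] at h

theorem pierce_none {x y : Term α} (h : pierce x y = none) :
    ∀ u v, y = .mul u v → ¬ TEquiv x u ∧ ¬ TEquiv x v := by
  rintro u v rfl
  by_cases h1 : TEquiv x u
  · simp [pierce, h1] at h
  · by_cases h2 : TEquiv x v
    · simp [pierce, h1, h2] at h
    · exact ⟨h1, h2⟩

theorem pierce_rank {x y z : Term α} (h : pierce x y = some z) :
    z.rank < y.rank ∧ x.rank < y.rank := by
  obtain ⟨u, v, rfl, hc⟩ := pierce_some h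
  rcases hc with ⟨h1, rfl⟩ | ⟨h1, h2, rfl⟩
  · have := tequiv_rank h1
    simp [Term.rank]; omega
  · have := tequiv_rank h2
    simp [Term.rank]; omega

/-- The reduced product of two (reduced) terms. -/
noncomputable def rmul (x y : Term α) : Term α :=
  if TEquiv x y then x
  else match pierce x y with
  | some z => z
  | none => match pierce y x with
    | some z => z
    | none => .mul x y

theorem tequiv_ne_rank {x y : Term α} (h : x.rank ≠ y.rank) : ¬ TEquiv x y :=
  fun hc => h (tequiv_rank hc)

theorem rmul_cases (x y : Term α) :
    (TEquiv x y ∧ rmul x y = x) ∨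
    (¬ TEquiv x y ∧ ∃ z, pierce x y = some z ∧ rmul x y = z) ∨
    (¬ TEquiv x y ∧ pierce x y = none ∧ ∃ z, pierce y x = some z ∧ rmul x y = z) ∨
    (¬ TEquiv x y ∧ pierce x y = none ∧ pierce y x = none ∧ rmul x y = .mul x y) := by
  by_cases h : TEquiv x y
  · exact Or.inl ⟨h, by simp [rmul, h]⟩
  · rcases e1 : pierce x y with _ | z
    · rcases e2 : pierce y x with _ | z
      · exact Or.inr (Or.inr (Or.inr ⟨h, rfl, rfl, by simp [rmul, h, e1, e2]⟩))
      · exact Or.inr (Or.inr (Or.inl ⟨h, rfl, z, rfl, by simp [rmul, h, e1, e2]⟩))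
    · exact Or.inr (Or.inl ⟨h, z, rfl, by simp [rmul, h, e1]⟩)

theorem rmul_reduced {x y : Term α} (hx : Reduced x) (hy : Reduced y) :
    Reduced (rmul x y) := by
  rcases rmul_cases x y with ⟨_, e⟩ | ⟨_, z, hz, e⟩ | ⟨_, _, z, hz, e⟩ | ⟨h, p1, p2, e⟩
  · rw [e]; exact hx
  · rw [e]
    obtain ⟨u, v, rfl, hc⟩ := pierce_some hz
    rcases hc with ⟨_, rfl⟩ | ⟨_, _, rfl⟩
    · exact reduced_right hy
    · exact reduced_left hy
  · rw [e]
    obtain ⟨u, v, rfl, hc⟩ := pierce_some hz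
    rcases hc with ⟨_, rfl⟩ | ⟨_, _, rfl⟩
    · exact reduced_right hx
    · exact reduced_left hx
  · rw [e]
    exact reduced_mul hx hy h (pierce_none p1) (fun u v hv => by
      have := pierce_none p2 u v hv
      exact ⟨fun hc => this.1 hc.symm, fun hc => this.2 hc.symm⟩)

end Steiner
namespace Steiner

variable {α : Type}

attribute [local instance] Classical.propDecidable

theorem pierce_eq_some₁ {x u v : Term α} (h : TEquiv x u) :
    pierce x (.mul u v) = some v := by simp [pierce, h]

theorem pierce_eq_some₂ {x u v : Term α} (h1 : ¬ TEquiv x u) (h2 : TEquiv x v) :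
    pierce x (.mul u v) = some u := by simp [pierce, h1, h2]

theorem pierce_eq_none {x u v : Term α} (h1 : ¬ TEquiv x u) (h2 : ¬ TEquiv x v) :
    pierce x (.mul u v) = none := by simp [pierce, h1, h2]

theorem rmul_of_equiv {x y : Term α} (h : TEquiv x y) : rmul x y = x := by
  simp [rmul, h]

theorem rmul_of_pierce₁ {x y z : Term α} (h : ¬ TEquiv x y) (e : pierce x y = some z) :
    rmul x y = z := by simp [rmul, h, e]

theorem rmul_of_pierce₂ {x y z : Term α} (h : ¬ TEquiv x y) (e1 : pierce x y = none)
    (e2 : pierce y x = some z) : rmul x y = z := by simp [rmul, h, e1, e2]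

theorem rmul_of_none {x y : Term α} (h : ¬ TEquiv x y) (e1 : pierce x y = none)
    (e2 : pierce y x = none) : rmul x y = .mul x y := by simp [rmul, h, e1, e2]

theorem rmul_idem (x : Term α) : rmul x x = x := rmul_of_equiv (.refl x)

theorem rmul_comm (x y : Term α) : TEquiv (rmul x y) (rmul y x) := by
  rcases rmul_cases x y with ⟨h, e⟩ | ⟨h, z, hz, e⟩ | ⟨h, p1, z, hz, e⟩ | ⟨h, p1, p2, e⟩
  · rw [e, rmul_of_equiv h.symm]; exact h
  · have hyx : pierce y x = none := by
      rcases e2 : pierce y x with _ | w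
      · rfl
      · exfalso
        have r1 := pierce_rank hz
        have r2 := pierce_rank e2
        omega
    rw [e, rmul_of_pierce₂ (fun hc => h hc.symm) hyx hz]
    exact TEquiv.refl z
  · rw [e, rmul_of_pierce₁ (fun hc => h hc.symm) hz]
    exact TEquiv.refl z
  · rw [e, rmul_of_none (fun hc => h hc.symm) p2 p1]
    exact TEquiv.comm x y

theorem rmul_lcancel {x y : Term α} (hx : Reduced x) (hy : Reduced y) :
    TEquiv (rmul x (rmul x y)) y := by
  rcases rmul_cases x y with ⟨h, e⟩ | ⟨h, z, hz, e⟩ | ⟨h, p1, z, hz, e⟩ | ⟨h, p1, p2, e⟩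
  · rw [e, rmul_idem]; exact h
  · obtain ⟨u, v, rfl, hc⟩ := pierce_some hz
    rcases hc with ⟨hxu, hzv⟩ | ⟨hxu, hxv, hzv⟩ <;> rw [hzv] at e <;> rw [e]
    · -- x ∼ u, goal : rmul x v ∼ mul u v
      have hxv : ¬ TEquiv x v := fun hc => reduced_top hy (hxu.symm.trans hc)
      have e1 : pierce x v = none := by
        cases v with
        | var a => rfl
        | mul p q =>
          have := reduced_top_right hy
          exact pierce_eq_none (fun hc => this.1 (hxu.symm.trans hc))
            (fun hc => this.2 (hxu.symm.trans hc))
      have e2 : pierce v x = none := by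
        cases x with
        | var a => rfl
        | mul p q =>
          obtain ⟨p', q', rfl, hpq⟩ := tequiv_mul hxu
          have := reduced_top_left hy
          rcases hpq with ⟨h1, h2⟩ | ⟨h1, h2⟩
          · exact pierce_eq_none (fun hc => this.1 (h1.symm.trans hc.symm))
              (fun hc => this.2 (h2.symm.trans hc.symm))
          · exact pierce_eq_none (fun hc => this.2 (h1.symm.trans hc.symm))
              (fun hc => this.1 (h2.symm.trans hc.symm))
      rw [rmul_of_none hxv e1 e2]
      exact TEquiv.congr hxu (TEquiv.refl v)
    · -- ¬x∼u, x ∼ v, goal : rmul x u ∼ mul u v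
      have e1 : pierce x u = none := by
        cases u with
        | var a => rfl
        | mul p q =>
          have := reduced_top_left hy
          exact pierce_eq_none (fun hc => this.1 (hc.symm.trans hxv))
            (fun hc => this.2 (hc.symm.trans hxv))
      have e2 : pierce u x = none := by
        cases x with
        | var a => rfl
        | mul p q =>
          obtain ⟨p', q', rfl, hpq⟩ := tequiv_mul hxv
          have := reduced_top_right hy
          rcases hpq with ⟨h1, h2⟩ | ⟨h1, h2⟩
          · exact pierce_eq_none (fun hc => this.1 (hc.trans h1))
              (fun hc => this.2 (hc.trans h2))
          · exact pierce_eq_none (fun hc => this.2 (hc.trans h1))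
              (fun hc => this.1 (hc.trans h2))
      rw [rmul_of_none hxu e1 e2]
      exact (TEquiv.congr hxv (TEquiv.refl u)).trans (TEquiv.comm v u)
  · obtain ⟨u, v, rfl, hc⟩ := pierce_some hz
    rcases hc with ⟨hyu, hzv⟩ | ⟨hyu, hyv, hzv⟩ <;> rw [hzv] at e <;> rw [e]
    · -- x = mul u v, y ∼ u, z = v; goal rmul x v ∼ y
      have hv : ¬ TEquiv (Term.mul u v) v :=
        tequiv_ne_rank (by simp [Term.rank]; omega)
      have e1 : pierce (Term.mul u v) v = none := by
        cases v with
        | var a => rfl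
        | mul p q =>
          refine pierce_eq_none (tequiv_ne_rank ?_) (tequiv_ne_rank ?_) <;>
            · simp [Term.rank]; omega
      have e2 : pierce v (Term.mul u v) = some u :=
        pierce_eq_some₂ (fun hc => reduced_top hx hc.symm) (TEquiv.refl v)
      rw [rmul_of_pierce₂ hv e1 e2]
      exact hyu.symm
    · -- x = mul u v, y ∼ v, z = u; goal rmul x u ∼ y
      have hu : ¬ TEquiv (Term.mul u v) u :=
        tequiv_ne_rank (by simp [Term.rank]; omega)
      have e1 : pierce (Term.mul u v) u = none := by
        cases u with
        | var a => rfl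
        | mul p q =>
          refine pierce_eq_none (tequiv_ne_rank ?_) (tequiv_ne_rank ?_) <;>
            · simp [Term.rank]; omega
      have e2 : pierce u (Term.mul u v) = some v :=
        pierce_eq_some₁ (TEquiv.refl u)
      rw [rmul_of_pierce₂ hu e1 e2]
      exact hyv.symm
  · rw [e]
    have h1 : ¬ TEquiv x (Term.mul x y) :=
      tequiv_ne_rank (by simp [Term.rank]; omega)
    rw [rmul_of_pierce₁ h1 (pierce_eq_some₁ (TEquiv.refl x))]
    exact TEquiv.refl y

theorem pierce_none_congr {x x' y y' : Term α} (hx : TEquiv x x') (hy : TEquiv y y')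
    (h : pierce x y = none) : pierce x' y' = none := by
  cases y' with
  | var a => rfl
  | mul u' v' =>
    obtain ⟨u, v, rfl, hc⟩ := tequiv_mul hy.symm
    have hn := pierce_none h u v rfl
    rcases hc with ⟨h1, h2⟩ | ⟨h1, h2⟩
    · exact pierce_eq_none (fun hc => hn.1 (hx.trans (hc.trans h1)))
        (fun hc => hn.2 (hx.trans (hc.trans h2)))
    · exact pierce_eq_none (fun hc => hn.2 (hx.trans (hc.trans h1)))
        (fun hc => hn.1 (hx.trans (hc.trans h2)))

theorem pierce_some_congr {x x' y y' z : Term α} (hyr : Reduced y)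
    (hx : TEquiv x x') (hy : TEquiv y y')
    (h : pierce x y = some z) : ∃ z', pierce x' y' = some z' ∧ TEquiv z z' := by
  obtain ⟨u, v, rfl, hc⟩ := pierce_some h
  obtain ⟨u', v', rfl, hp⟩ := tequiv_mul hy
  have huv : ¬ TEquiv u v := reduced_top hyr
  rcases hc with ⟨hxu, hzv⟩ | ⟨hxu, hxv, hzv⟩ <;> rw [hzv]
  · have hxv : ¬ TEquiv x v := fun hc => huv (hxu.symm.trans hc)
    rcases hp with ⟨h1, h2⟩ | ⟨h1, h2⟩
    · exact ⟨v', pierce_eq_some₁ (hx.symm.trans (hxu.trans h1)), h2⟩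
    · exact ⟨u', pierce_eq_some₂ (fun hc => hxv ((hx.trans hc).trans h2.symm))
        (hx.symm.trans (hxu.trans h1)), h2⟩
  · rcases hp with ⟨h1, h2⟩ | ⟨h1, h2⟩
    · exact ⟨u', pierce_eq_some₂ (fun hc => hxu ((hx.trans hc).trans h1.symm))
        (hx.symm.trans (hxv.trans h2)), h1⟩
    · exact ⟨v', pierce_eq_some₁ (hx.symm.trans (hxv.trans h2)), h1⟩

theorem rmul_sound {x x' y y' : Term α} (hxr : Reduced x) (hyr : Reduced y)
    (hx : TEquiv x x') (hy : TEquiv y y') : TEquiv (rmul x y) (rmul x' y') := by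
  rcases rmul_cases x y with ⟨h, e⟩ | ⟨h, z, hz, e⟩ | ⟨h, p1, z, hz, e⟩ | ⟨h, p1, p2, e⟩
  · rw [e, rmul_of_equiv ((hx.symm.trans h).trans hy)]; exact hx
  · have h' : ¬ TEquiv x' y' := fun hc => h ((hx.trans hc).trans hy.symm)
    obtain ⟨z', hz', hzz⟩ := pierce_some_congr hyr hx hy hz
    rw [e, rmul_of_pierce₁ h' hz']; exact hzz
  · have h' : ¬ TEquiv x' y' := fun hc => h ((hx.trans hc).trans hy.symm)
    obtain ⟨z', hz', hzz⟩ := pierce_some_congr hxr hy hx hz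
    rw [e, rmul_of_pierce₂ h' (pierce_none_congr hx hy p1) hz']; exact hzz
  · have h' : ¬ TEquiv x' y' := fun hc => h ((hx.trans hc).trans hy.symm)
    rw [e, rmul_of_none h' (pierce_none_congr hx hy p1) (pierce_none_congr hy hx p2)]
    exact TEquiv.congr hx hy

theorem eval_rmul {N : Type} [Steiner N] (e : α → N) (x y : Term α) :
    (rmul x y).eval e = x.eval e * y.eval e := by
  rcases rmul_cases x y with ⟨h, he⟩ | ⟨h, z, hz, he⟩ | ⟨h, p1, z, hz, he⟩ | ⟨h, p1, p2, he⟩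
  · rw [he, eval_tequiv e h]; exact (Steiner.idem _).symm
  · obtain ⟨u, v, rfl, hc⟩ := pierce_some hz
    rcases hc with ⟨hxu, hzv⟩ | ⟨hxu, hxv, hzv⟩ <;> rw [hzv] at he <;> rw [he]
    · rw [eval_tequiv e hxu]
      show (v.eval e) = u.eval e * (u.eval e * v.eval e)
      rw [Steiner.lcancel]
    · rw [eval_tequiv e hxv]
      show (u.eval e) = v.eval e * (u.eval e * v.eval e)
      rw [Steiner.comm (u.eval e) (v.eval e), Steiner.lcancel]
  · obtain ⟨u, v, rfl, hc⟩ := pierce_some hz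
    rcases hc with ⟨hyu, hzv⟩ | ⟨hyu, hyv, hzv⟩ <;> rw [hzv] at he <;> rw [he]
    · rw [eval_tequiv e hyu]
      show (v.eval e) = (u.eval e * v.eval e) * u.eval e
      rw [Steiner.comm (u.eval e * v.eval e) (u.eval e), Steiner.lcancel]
    · rw [eval_tequiv e hyv]
      show (u.eval e) = (u.eval e * v.eval e) * v.eval e
      rw [Steiner.comm (u.eval e) (v.eval e),
        Steiner.comm (v.eval e * u.eval e) (v.eval e), Steiner.lcancel]
  · rw [he]; rfl

theorem rmul_rank_le (x y : Term α) : (rmul x y).rank ≤ max x.rank y.rank + 1 := by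
  rcases rmul_cases x y with ⟨h, he⟩ | ⟨h, z, hz, he⟩ | ⟨h, p1, z, hz, he⟩ | ⟨h, p1, p2, he⟩
  · rw [he]; omega
  · rw [he]; have := pierce_rank hz; omega
  · rw [he]; have := pierce_rank hz; omega
  · rw [he]; simp [Term.rank]

end Steiner
namespace Steiner

variable {α : Type}

attribute [local instance] Classical.propDecidable

/-- Reduced terms. -/
abbrev RT (α : Type) : Type := {t : Term α // Reduced t}

instance rsetoid (α : Type) : Setoid (RT α) where
  r a b := TEquiv a.1 b.1
  iseqv := ⟨fun a => .refl a.1, TEquiv.symm, TEquiv.trans⟩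

/-- The free Steiner quasigroup on `α`. -/
def SQ (α : Type) : Type := Quotient (rsetoid α)

/-- Class of a reduced term. -/
def mkSQ (t : RT α) : SQ α := Quotient.mk (rsetoid α) t

theorem mkSQ_surjective : Function.Surjective (mkSQ (α := α)) :=
  fun z => Quotient.inductionOn z (fun t => ⟨t, rfl⟩)

theorem mkSQ_eq {a b : RT α} (h : TEquiv a.1 b.1) : mkSQ a = mkSQ b :=
  Quotient.sound h

theorem mkSQ_eq_iff {a b : RT α} : mkSQ a = mkSQ b ↔ TEquiv a.1 b.1 :=
  ⟨Quotient.exact, fun h => Quotient.sound h⟩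

noncomputable instance : Steiner (SQ α) where
  mul := Quotient.map₂ (fun a b => (⟨rmul a.1 b.1, rmul_reduced a.2 b.2⟩ : RT α))
    (fun a a' ha b b' hb => rmul_sound a.2 b.2 ha hb)
  comm := fun x y => Quotient.inductionOn₂ x y
    (fun a b => Quotient.sound (rmul_comm a.1 b.1))
  idem := fun x => Quotient.inductionOn x
    (fun a => Quotient.sound (show TEquiv (rmul a.1 a.1) a.1 by
      rw [rmul_idem]; exact TEquiv.refl _))
  lcancel := fun x y => Quotient.inductionOn₂ x y
    (fun a b => Quotient.sound (rmul_lcancel a.2 b.2))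

theorem sq_mul_def (a b : RT α) :
    mkSQ a * mkSQ b = mkSQ (⟨rmul a.1 b.1, rmul_reduced a.2 b.2⟩ : RT α) := rfl

/-- The canonical generators. -/
def varF (x : α) : SQ α := mkSQ ⟨.var x, reduced_var x⟩

/-- The evaluation homomorphism out of the free model. -/
noncomputable def evalF {N : Type} [Steiner N] (e : α → N) : SQ α →ₙ* N where
  toFun := Quotient.lift (fun t : RT α => t.1.eval e) (fun a b h => eval_tequiv e h)
  map_mul' := fun x y => Quotient.inductionOn₂ x y (fun a b => eval_rmul e a.1 b.1)

theorem evalF_var {N : Type} [Steiner N] (e : α → N) (x : α) :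
    evalF e (varF x) = e x := rfl

theorem evalF_mk {N : Type} [Steiner N] (e : α → N) (t : RT α) :
    evalF e (mkSQ t) = t.1.eval e := rfl

theorem rmul_of_reduced_mul {u v : Term α} (h : Reduced (.mul u v)) :
    rmul u v = .mul u v := by
  refine rmul_of_none (reduced_top h) ?_ ?_
  · cases v with
    | var a => rfl
    | mul p q =>
      have := reduced_top_right h
      exact pierce_eq_none this.1 this.2
  · cases u with
    | var a => rfl
    | mul p q =>
      have := reduced_top_left h
      exact pierce_eq_none (fun hc => this.1 hc.symm) (fun hc => this.2 hc.symm)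

theorem sq_mk_mul {u v : Term α} (h : Reduced (.mul u v)) :
    mkSQ (⟨.mul u v, h⟩ : RT α)
      = mkSQ (⟨u, reduced_left h⟩ : RT α) * mkSQ (⟨v, reduced_right h⟩ : RT α) := by
  rw [sq_mul_def]
  exact mkSQ_eq (show TEquiv _ (rmul u v) by rw [rmul_of_reduced_mul h]; exact TEquiv.refl _)

/-- Rank on the free model. -/
def rankF : SQ α → ℕ := Quotient.lift (fun t : RT α => t.1.rank) (fun a b h => tequiv_rank h)

theorem rankF_mk (t : RT α) : rankF (mkSQ t) = t.1.rank := rfl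

theorem rankF_var (x : α) : rankF (varF x) = 0 := rfl

theorem rankF_eq_zero {z : SQ α} (h : rankF z = 0) : ∃ x, z = varF x := by
  obtain ⟨⟨t, ht⟩, rfl⟩ := mkSQ_surjective z
  cases t with
  | var x => exact ⟨x, rfl⟩
  | mul u v => simp [rankF_mk, Term.rank] at h

/-- Two homomorphisms agreeing on a generating set agree everywhere. -/
theorem hom_ext {M N : Type} [Steiner M] [Steiner N] {A : Set M}
    (g h : M →ₙ* N) (hA : ∀ a ∈ A, g a = h a) {m : M} (hm : m ∈ closure A) :
    g m = h m := by
  induction hm with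
  | base ha => exact hA _ ha
  | mul _ _ ih1 ih2 => rw [map_mul, map_mul, ih1, ih2]

end Steiner
/-- `A` is a free base of `M` iff there is a well-ordered F-ordering of `M`
over `A`. -/
theorem stmt6 {M : Type} [Steiner M] (A : Set M) :
    FreeBase A ↔ ∃ r : M → M → Prop, IsWellOrder M r ∧
      ∀ a : M, ∃ a1 a2 : M, a = a1 * a2 ∧ (a1 ∈ A ∨ r a1 a) ∧ (a2 ∈ A ∨ r a2 a) ∧
        ∀ b1 b2 : M, a = b1 * b2 → (b1 ∈ A ∨ r b1 a) → (b2 ∈ A ∨ r b2 a) →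
          ({b1, b2} : Set M) = {a1, a2} := by
  classical
  constructor
  · -- Forward direction
    rintro ⟨hcl, huniv⟩
    obtain ⟨g, hg⟩ := huniv (SQ ↥A) (fun a => varF a)
    set h : SQ ↥A →ₙ* M := evalF (fun a => a.1) with hh
    have hgh : ∀ m : M, h (g m) = m := by
      intro m
      have hm : m ∈ closure A := by rw [hcl]; trivial
      exact hom_ext (h.comp g) (MulHom.id M) (fun a ha => by
        show h (g a) = a
        rw [hg ⟨a, ha⟩]; rfl) hm
    have hhg0 : ∀ (t : Term ↥A) (ht : Reduced t), g (h (mkSQ ⟨t, ht⟩)) = mkSQ ⟨t, ht⟩ := by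
      intro t
      induction t with
      | var x => intro ht; show g (h (varF x)) = varF x; rw [show h (varF x) = x.1 from rfl]
                 exact hg x
      | mul u v ihu ihv =>
        intro ht
        rw [sq_mk_mul ht, map_mul, map_mul, ihu (reduced_left ht), ihv (reduced_right ht)]
    have hhg : ∀ z : SQ ↥A, g (h z) = z := by
      intro z; obtain ⟨⟨t, ht⟩, rfl⟩ := mkSQ_surjective z; exact hhg0 t ht
    have ginj : Function.Injective g := fun a b hab => by
      rw [← hgh a, ← hgh b, hab]
    set ρ : M → ℕ := fun m => rankF (g m) with hρ
    -- basic facts about ρ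
    have hA0 : ∀ a ∈ A, ρ a = 0 := fun a ha => by
      show rankF (g a) = 0; rw [hg ⟨a, ha⟩]; rfl
    have h0A : ∀ a : M, ρ a = 0 → a ∈ A := by
      intro a ha
      obtain ⟨x, hx⟩ := rankF_eq_zero ha
      have : a = x.1 := by rw [← hgh a, hx]; rfl
      rw [this]; exact x.2
    -- decomposition of non-generators
    have hdecomp : ∀ a : M, a ∉ A → ∃ a1 a2 : M, a1 ≠ a2 ∧ ρ a1 < ρ a ∧ ρ a2 < ρ a ∧
        a = a1 * a2 := by
      intro a ha
      obtain ⟨⟨t, ht⟩, hta⟩ := mkSQ_surjective (g a)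
      cases t with
      | var x =>
        exfalso
        exact ha (h0A a (by show rankF (g a) = 0; rw [← hta]; rfl))
      | mul u v =>
        refine ⟨h (mkSQ ⟨u, reduced_left ht⟩), h (mkSQ ⟨v, reduced_right ht⟩), ?_, ?_, ?_, ?_⟩
        · intro hcon
          have := congrArg g hcon
          rw [hhg, hhg] at this
          exact reduced_top ht (mkSQ_eq_iff.1 this)
        · show rankF (g _) < rankF (g a)
          rw [hhg, ← hta, rankF_mk, rankF_mk]
          simp [Term.rank]
        · show rankF (g _) < rankF (g a)
          rw [hhg, ← hta, rankF_mk, rankF_mk]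
          simp [Term.rank]
        · rw [← hgh a, ← hta, sq_mk_mul ht, map_mul]
    -- rank trichotomy for products
    have L1 : ∀ b c : M, b ≠ c → ρ (b * c) < ρ b ∨ ρ (b * c) < ρ c ∨
        (ρ b < ρ (b * c) ∧ ρ c < ρ (b * c)) := by
      intro b c hbc
      obtain ⟨tb, htb⟩ := mkSQ_surjective (g b)
      obtain ⟨tc, htc⟩ := mkSQ_surjective (g c)
      have hbc' : ¬ TEquiv tb.1 tc.1 := fun hcon =>
        hbc (ginj (by rw [← htb, ← htc]; exact mkSQ_eq hcon))
      have hgbc : ρ (b * c) = (rmul tb.1 tc.1).rank := by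
        show rankF (g (b * c)) = _
        rw [map_mul, ← htb, ← htc, sq_mul_def, rankF_mk]
      have hrb : ρ b = tb.1.rank := by show rankF (g b) = _; rw [← htb, rankF_mk]
      have hrc : ρ c = tc.1.rank := by show rankF (g c) = _; rw [← htc, rankF_mk]
      rcases rmul_cases tb.1 tc.1 with ⟨hq, _⟩ | ⟨_, z, hz, e⟩ | ⟨_, _, z, hz, e⟩ |
        ⟨_, _, _, e⟩
      · exact absurd hq hbc'
      · right; left; rw [hgbc, e, hrc]; exact (pierce_rank hz).1
      · left; rw [hgbc, e, hrb]; exact (pierce_rank hz).1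
      · right; right
        rw [hgbc, e, hrb, hrc]
        constructor <;> · simp [Term.rank]
    -- a product with lower-rank factors is given by a literal reduced term
    have hstep : ∀ (p q : M) (tp tq : RT ↥A), p ≠ q → mkSQ tp = g p → mkSQ tq = g q →
        ρ p < ρ (p * q) → ρ q < ρ (p * q) →
        ∃ hr : Reduced (Term.mul tp.1 tq.1),
          g (p * q) = mkSQ ⟨Term.mul tp.1 tq.1, hr⟩ := by
      intro p q tp tq hpq htp htq hp hq
      have hne : ¬ TEquiv tp.1 tq.1 := fun hcon =>
        hpq (ginj (by rw [← htp, ← htq]; exact mkSQ_eq hcon))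
      have hgpq : g (p * q) = mkSQ ⟨rmul tp.1 tq.1, rmul_reduced tp.2 tq.2⟩ := by
        rw [map_mul, ← htp, ← htq, sq_mul_def]
      have hrpq : ρ (p * q) = (rmul tp.1 tq.1).rank := by
        show rankF (g (p * q)) = _; rw [hgpq, rankF_mk]
      have hrp : ρ p = tp.1.rank := by show rankF (g p) = _; rw [← htp, rankF_mk]
      have hrq : ρ q = tq.1.rank := by show rankF (g q) = _; rw [← htq, rankF_mk]
      rcases rmul_cases tp.1 tq.1 with ⟨hc, _⟩ | ⟨_, z, hz, e⟩ | ⟨_, _, z, hz, e⟩ |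
        ⟨_, _, _, e⟩
      · exact absurd hc hne
      · exfalso; have := (pierce_rank hz).1; rw [e] at hrpq; omega
      · exfalso; have := (pierce_rank hz).1; rw [e] at hrpq; omega
      · refine ⟨e ▸ rmul_reduced tp.2 tq.2, ?_⟩
        rw [hgpq]
        refine mkSQ_eq ?_
        show TEquiv (rmul tp.1 tq.1) (Term.mul tp.1 tq.1)
        rw [e]
        exact TEquiv.refl _
    -- uniqueness for low-rank decompositions
    have L2 : ∀ a b c b' c' : M, a = b * c → a = b' * c' → b ≠ c → b' ≠ c' →
        ρ b < ρ a → ρ c < ρ a → ρ b' < ρ a → ρ c' < ρ a →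
        ({b', c'} : Set M) = {b, c} := by
      intro a b c b' c' habc habc' hbc hbc' h1 h2 h3 h4
      obtain ⟨tb, htb⟩ := mkSQ_surjective (g b)
      obtain ⟨tc, htc⟩ := mkSQ_surjective (g c)
      obtain ⟨tb', htb'⟩ := mkSQ_surjective (g b')
      obtain ⟨tc', htc'⟩ := mkSQ_surjective (g c')
      obtain ⟨hr1, he1⟩ := hstep b c tb tc hbc htb htc (habc ▸ h1) (habc ▸ h2)
      obtain ⟨hr2, he2⟩ := hstep b' c' tb' tc' hbc' htb' htc' (habc' ▸ h3) (habc' ▸ h4)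
      rw [← habc] at he1
      rw [← habc'] at he2
      have heq : TEquiv (Term.mul tb.1 tc.1) (Term.mul tb'.1 tc'.1) :=
        mkSQ_eq_iff.1 (he1.symm.trans he2)
      obtain ⟨u', v', huv, hp⟩ := tequiv_mul heq
      injection huv with e1 e2
      subst e1; subst e2
      rcases hp with ⟨hx, hy⟩ | ⟨hx, hy⟩
      · have hb : b = b' := ginj (by rw [← htb, ← htb']; exact mkSQ_eq hx)
        have hc : c = c' := ginj (by rw [← htc, ← htc']; exact mkSQ_eq hy)
        rw [hb, hc]
      · have hb : b = c' := ginj (by rw [← htb, ← htc']; exact mkSQ_eq hx)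
        have hc : c = b' := ginj (by rw [← htc, ← htb']; exact mkSQ_eq hy)
        rw [← hb, ← hc, Set.pair_comm]
    -- the rank-lexicographic well-order
    set rr : M → M → Prop :=
      fun x y => Prod.Lex (· < · : ℕ → ℕ → Prop) WellOrderingRel (ρ x, x) (ρ y, y) with hrr
    have hwo : IsWellOrder M rr := by
      have emb : rr ↪r Prod.Lex (· < · : ℕ → ℕ → Prop) WellOrderingRel :=
        ⟨⟨fun m => (ρ m, m), fun a b hab => congrArg Prod.snd hab⟩, Iff.rfl⟩
      exact emb.isWellOrder
    have hr1 : ∀ x y : M, ρ x < ρ y → rr x y := fun x y hxy => Prod.Lex.left _ _ hxy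
    have hr2 : ∀ x y : M, rr x y → ρ x < ρ y ∨ ρ x = ρ y := by
      intro x y hxy
      rcases Prod.lex_iff.1 hxy with h | ⟨h, _⟩
      · exact Or.inl h
      · exact Or.inr h
    refine ⟨rr, hwo, ?_⟩
    intro a
    by_cases ha : a ∈ A
    · refine ⟨a, a, (Steiner.idem a).symm, Or.inl ha, Or.inl ha, ?_⟩
      intro b1 b2 heq h1 h2
      by_cases hb : b1 = b2
      · subst hb
        rw [Steiner.idem] at heq
        subst heq
        rfl
      · exfalso
        have h0 : ρ a = 0 := hA0 a ha
        have hadm : ∀ bx : M, (bx ∈ A ∨ rr bx a) → ρ bx = 0 := fun bx hx =>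
          hx.elim (hA0 bx) (fun hrx => by rcases hr2 _ _ hrx with hlt | heqx <;> omega)
        have e1 := hadm b1 h1
        have e2 := hadm b2 h2
        rcases L1 b1 b2 hb with hc | hc | hc <;> rw [← heq] at hc <;> omega
    · obtain ⟨a1, a2, hne, hlt1, hlt2, hmul⟩ := hdecomp a ha
      refine ⟨a1, a2, hmul, Or.inr (hr1 _ _ hlt1), Or.inr (hr1 _ _ hlt2), ?_⟩
      intro b1 b2 heq h1 h2
      have hane : ρ a ≠ 0 := fun h0 => ha (h0A a h0)
      by_cases hb : b1 = b2
      · exfalso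
        subst hb
        rw [Steiner.idem] at heq
        subst heq
        rcases h1 with hA1 | hrx
        · exact ha hA1
        · exact irrefl_of rr _ hrx
      · have hb12 : ρ b1 < ρ a ∧ ρ b2 < ρ a := by
          have k1 : ρ b1 < ρ a ∨ ρ b1 = ρ a := by
            rcases h1 with hA1 | hrx
            · left; have := hA0 _ hA1; omega
            · exact hr2 _ _ hrx
          have k2 : ρ b2 < ρ a ∨ ρ b2 = ρ a := by
            rcases h2 with hA2 | hrx
            · left; have := hA0 _ hA2; omega
            · exact hr2 _ _ hrx
          rcases L1 b1 b2 hb with hc | hc | hc <;> rw [← heq] at hc <;> omega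
        exact L2 a a1 a2 b1 b2 hmul heq hne hb hlt1 hlt2 hb12.1 hb12.2
  · -- Backward direction
    rintro ⟨r, hwo, hdec⟩
    haveI := hwo
    have wf : WellFounded r := hwo.toIsWellFounded.wf
    choose d1 d2 hprod hadm1 hadm2 huniq using hdec
    have hcl : closure A = Set.univ := by
      ext a
      simp only [Set.mem_univ, iff_true]
      refine wf.induction a ?_
      intro x ih
      have hx := hprod x
      rw [hx]
      exact mem_closure.mul
        ((hadm1 x).elim mem_closure.base (fun hr => ih _ hr))
        ((hadm2 x).elim mem_closure.base (fun hr => ih _ hr))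
    refine ⟨hcl, ?_⟩
    intro N _ f
    have hcanc : ∀ x y : M, x * y = x → y = x := by
      intro x y hxy
      have := Steiner.lcancel x y
      rw [hxy, Steiner.idem] at this
      exact this.symm
    set F : ∀ a : M, (∀ b : M, r b a → N) → N := fun a IH =>
      if h : a ∈ A then f ⟨a, h⟩ else
        (if h1 : d1 a ∈ A then f ⟨d1 a, h1⟩ else IH (d1 a) ((hadm1 a).resolve_left h1)) *
        (if h2 : d2 a ∈ A then f ⟨d2 a, h2⟩ else IH (d2 a) ((hadm2 a).resolve_left h2))
      with hF
    set g : M → N := wf.fix F with hgdef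
    have gfix : ∀ a, g a = F a (fun b _ => g b) := fun a => wf.fix_eq F a
    have gA : ∀ (a : M) (h : a ∈ A), g a = f ⟨a, h⟩ := by
      intro a h; rw [gfix, hF]; exact dif_pos h
    have gmul : ∀ a : M, a ∉ A → g a = g (d1 a) * g (d2 a) := by
      intro a h
      rw [gfix a, hF]
      simp only [dif_neg h]
      congr 1
      · by_cases h1 : d1 a ∈ A
        · rw [dif_pos h1, gA _ h1]
        · rw [dif_neg h1]
      · by_cases h2 : d2 a ∈ A
        · rw [dif_pos h2, gA _ h2]
        · rw [dif_neg h2]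
    have hAuniq : ∀ a ∈ A, d1 a = a ∧ d2 a = a := by
      intro a ha
      have := huniq a a a (Steiner.idem a).symm (Or.inl ha) (Or.inl ha)
      rw [Set.pair_eq_pair_iff] at this
      rcases this with ⟨h1, h2⟩ | ⟨h1, h2⟩
      · exact ⟨h1.symm, h2.symm⟩
      · exact ⟨h2.symm, h1.symm⟩
    have gtop : ∀ a x y : M, x ≠ y → r x a → r y a → a = x * y → g a = g x * g y := by
      intro a x y hxy hx hy heq
      have hu := huniq a x y heq (Or.inr hx) (Or.inr hy)
      have haA : a ∉ A := by
        intro ha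
        obtain ⟨h1, h2⟩ := hAuniq a ha
        rw [h1, h2] at hu
        rw [Set.pair_eq_pair_iff] at hu
        rcases hu with ⟨e1, _⟩ | ⟨e1, _⟩ <;> exact irrefl_of r a (e1 ▸ hx)
      rw [gmul a haA]
      rw [Set.pair_eq_pair_iff] at hu
      rcases hu with ⟨rfl, rfl⟩ | ⟨rfl, rfl⟩
      · rfl
      · exact Steiner.comm _ _
    have hom : ∀ x y : M, g (x * y) = g x * g y := by
      intro x y
      by_cases hxy : x = y
      · subst hxy; rw [Steiner.idem, Steiner.idem]
      have hzx : x * y ≠ x := fun hcon => hxy (hcanc x y hcon).symm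
      have hzy : x * y ≠ y := fun hcon =>
        hxy (hcanc y x (by rw [Steiner.comm y x]; exact hcon))
      have hyx : x = y * (x * y) := by
        rw [Steiner.comm x y, Steiner.lcancel]
      have hxx : y = x * (x * y) := by rw [Steiner.lcancel]
      rcases trichotomous_of r x (x * y) with h1 | h1 | h1
      · rcases trichotomous_of r y (x * y) with h2 | h2 | h2
        · exact gtop (x * y) x y hxy h1 h2 rfl
        · exact absurd h2 hzy.symm
        · -- y on top : y = x * (x*y)
          have h3 : r x y := trans_of r h1 h2
          have h4 := gtop y x (x * y) hzx.symm h3 h2 hxx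
          rw [h4]
          exact (Steiner.lcancel (g x) (g (x * y))).symm
      · exact absurd h1 hzx.symm
      · rcases trichotomous_of r y x with h2 | h2 | h2
        · -- x on top : x = y * (x*y)
          have h4 := gtop x y (x * y) hzy.symm h2 h1 hyx
          rw [h4, Steiner.comm (g y * g (x * y)) (g y), Steiner.lcancel]
        · exact absurd h2 (fun e => hxy e.symm)
        · -- y on top
          have h3 : r (x * y) y := trans_of r h1 h2
          have h4 := gtop y x (x * y) hzx.symm h2 h3 hxx
          rw [h4]
          exact (Steiner.lcancel (g x) (g (x * y))).symm
    exact ⟨⟨g, fun x y => hom x y⟩, fun a => by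
      show g a.1 = f a
      rw [gA a.1 a.2]⟩
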